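/- Let k, t be integers with 2 ≤ t ≤ k−1 and let S = {π1, …, πn} (n ≥ 3) be a (k; k−t, k−t+1)-SPID in a finite-dimensional vector space V over a field which is not a (k−t)-junta, with dim⟨S⟩ = k + (n−1)(t−1) + 1, ordered so that for some m ≥ 3 one has δ(S) = (k, t, …, t, t−1, …, t−1, t+1−m) with δ_2 = … = δ_m = t (with π1, …, πm forming a (k−t)-sunflower of maximal dimension) and δ_j = t−1 for m+1 ≤ j ≤ n−1. Then dim(π_n ∩ π_j) = k − t for every j ∈ {1, …, n−1}. -/
import Mathlib


open Module

variable {F : Type*} [Field F] {V : Type*} [AddCommGroup V] [Module F V]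
  [FiniteDimensional F V]

/-- The subspace `⟨π_1, …, π_j⟩` (1-based), i.e. the span of the `π i` with `(i : ℕ) < j`. -/
def pspan {n : ℕ} (π : Fin n → Submodule F V) (j : ℕ) : Submodule F V :=
  ⨆ i : Fin n, ⨆ _ : (i : ℕ) < j, π i

/-- The 1-based difference sequence `δ_j = dim⟨π_1,…,π_j⟩ - dim⟨π_1,…,π_{j-1}⟩`. -/
noncomputable def delta {n : ℕ} (π : Fin n → Submodule F V) (j : ℕ) : ℕ :=
  finrank F ↥(pspan π j) - finrank F ↥(pspan π (j - 1))

/-- A `(k; ℓ_1, …, ℓ_v)`-SPID, where `L` is the set of prescribed intersection dimensions: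
a family of pairwise distinct `k`-dimensional subspaces, any two distinct members meeting
in a dimension belonging to `L`, and every value of `L` being attained. -/
def IsSPID {n : ℕ} (k : ℕ) (L : Set ℕ) (π : Fin n → Submodule F V) : Prop :=
  Function.Injective π ∧
  (∀ i, finrank F ↥(π i) = k) ∧
  (∀ i j, i ≠ j → finrank F ↥(π i ⊓ π j) ∈ L) ∧
  ∀ ℓ ∈ L, ∃ i j, i ≠ j ∧ finrank F ↥(π i ⊓ π j) = ℓ

/-- An `ℓ`-junta: all members pass through a common `ℓ`-dimensional subspace. -/
def IsJunta {n : ℕ} (ℓ : ℕ) (π : Fin n → Submodule F V) : Prop :=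
  ∃ C : Submodule F V, finrank F ↥C = ℓ ∧ ∀ i, C ≤ π i

/-- `S` contains an `ℓ`-sunflower of maximal dimension with `p` petals (all petals being
`k`-dimensional): `p` members of `S` pairwise meeting exactly in a common `ℓ`-dimensional
center and spanning a subspace of dimension `ℓ + p(k - ℓ)`. -/
def HasMaxSunflower (k ℓ p : ℕ) (S : Set (Submodule F V)) : Prop :=
  ∃ A : Finset (Submodule F V), ↑A ⊆ S ∧ A.card = p ∧
    ∃ C : Submodule F V, finrank F ↥C = ℓ ∧
      (∀ W ∈ A, ∀ W' ∈ A, W ≠ W' → W ⊓ W' = C) ∧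
      finrank F ↥(A.sup id) = ℓ + p * (k - ℓ)

section AuxSPID

lemma SPID.sum_bound (C : ℕ → Submodule F V) (Z : Submodule F V)
    (h : ∀ i, C i ⊓ (Finset.range i).sup C ≤ Z) (j : ℕ) :
    ∑ i ∈ Finset.range j, finrank F ↥(C i) ≤
      finrank F ↥((Finset.range j).sup C) + (j - 1) * finrank F ↥Z := by
  induction j with
  | zero => simp
  | succ j ih =>
    rw [Finset.sum_range_succ, Finset.range_add_one, Finset.sup_insert]
    have key : finrank F ↥(C j ⊔ (Finset.range j).sup C) +
        finrank F ↥(C j ⊓ (Finset.range j).sup C)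
        = finrank F ↥(C j) + finrank F ↥((Finset.range j).sup C) :=
      Submodule.finrank_sup_add_finrank_inf_eq _ _
    have hZ : finrank F ↥(C j ⊓ (Finset.range j).sup C) ≤ finrank F ↥Z :=
      Submodule.finrank_mono (h j)
    rcases Nat.eq_zero_or_pos j with rfl | hj
    · have hle : (C 0 : Submodule F V) ≤ C 0 ⊔ (Finset.range 0).sup C := le_sup_left
      simpa using Submodule.finrank_mono hle
    · have hmul : (j + 1 - 1) * finrank F ↥Z = (j - 1) * finrank F ↥Z + finrank F ↥Z := by
        rw [show j + 1 - 1 = (j - 1) + 1 by omega]; ring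
      rw [hmul]
      linarith

lemma SPID.pspan_mono {n : ℕ} (π : Fin n → Submodule F V) {a b : ℕ} (hab : a ≤ b) :
    pspan π a ≤ pspan π b :=
  iSup_mono fun i => iSup_le fun h => le_iSup_of_le (h.trans_le hab) le_rfl

lemma SPID.le_pspan {n : ℕ} (π : Fin n → Submodule F V) (i : Fin n) {j : ℕ}
    (h : (i : ℕ) < j) : π i ≤ pspan π j :=
  le_iSup_of_le i (le_iSup_of_le h le_rfl)

lemma SPID.pspan_zero {n : ℕ} (π : Fin n → Submodule F V) : pspan π 0 = ⊥ := by
  simp [pspan]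

lemma SPID.pspan_succ {n : ℕ} (π : Fin n → Submodule F V) {j : ℕ} (hj : j < n) :
    pspan π (j + 1) = pspan π j ⊔ π ⟨j, hj⟩ := by
  apply le_antisymm
  · refine iSup₂_le fun i hi => ?_
    rcases Nat.lt_succ_iff_lt_or_eq.mp hi with h | h
    · exact le_sup_of_le_left (SPID.le_pspan π i h)
    · have : i = ⟨j, hj⟩ := Fin.ext h
      rw [this]; exact le_sup_right
  · exact sup_le (SPID.pspan_mono π (Nat.le_succ j)) (SPID.le_pspan π _ (Nat.lt_succ_self j))

lemma SPID.pspan_top {n : ℕ} (π : Fin n → Submodule F V) : pspan π n = ⨆ i, π i :=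
  le_antisymm (iSup₂_le fun i _ => le_iSup _ i)
    (iSup_le fun i => SPID.le_pspan π i i.isLt)

lemma SPID.finrank_pspan_succ {n : ℕ} (π : Fin n → Submodule F V) (j : ℕ) :
    finrank F ↥(pspan π (j + 1)) = finrank F ↥(pspan π j) + delta π (j + 1) := by
  have h : finrank F ↥(pspan π j) ≤ finrank F ↥(pspan π (j + 1)) :=
    Submodule.finrank_mono (SPID.pspan_mono π (Nat.le_succ j))
  simp only [delta]
  rw [show j + 1 - 1 = j from rfl]
  omega

lemma SPID.finrank_inf_pspan {n : ℕ} (π : Fin n → Submodule F V) {j : ℕ} (hj : j < n) :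
    finrank F ↥(π ⟨j, hj⟩ ⊓ pspan π j) + finrank F ↥(pspan π (j + 1)) =
      finrank F ↥(π ⟨j, hj⟩) + finrank F ↥(pspan π j) := by
  rw [SPID.pspan_succ π hj, sup_comm]
  have := Submodule.finrank_sup_add_finrank_inf_eq (π ⟨j, hj⟩) (pspan π j)
  omega

end AuxSPID

set_option maxHeartbeats 1000000 in
/-- Inside the proof of Lemma 2.4: with array `(k, t, …, t, t-1, …, t-1, t+1-m)` and
`π_1,…,π_m` a `(k-t)`-sunflower of maximal dimension, the last member meets every other
member in dimension exactly `k - t`. -/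
theorem statement12 {n k t m : ℕ} (ht2 : 2 ≤ t) (htk : t + 1 ≤ k) (hn : 3 ≤ n)
    (hm : 3 ≤ m) (hmn : m ≤ n - 1)
    (π : Fin n → Submodule F V) (hS : IsSPID k {k - t, k - t + 1} π)
    (hjunta : ¬ IsJunta (k - t) π)
    (hspan : finrank F ↥(⨆ i, π i) = k + (n - 1) * (t - 1) + 1)
    (hd1 : delta π 1 = k)
    (hdt : ∀ j, 2 ≤ j → j ≤ m → delta π j = t)
    (hdt1 : ∀ j, m + 1 ≤ j → j ≤ n - 1 → delta π j = t - 1)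
    (hdn : delta π n = t + 1 - m)
    (V' : Submodule F V) (hV' : finrank F ↥V' = k - t)
    (hcenter : ∀ i j : Fin n, (i : ℕ) < m → (j : ℕ) < m → i ≠ j → π i ⊓ π j = V')
    (hmax : finrank F ↥(pspan π m) = (k - t) + m * t) :
    ∀ j : Fin n, (j : ℕ) < n - 1 →
      finrank F ↥(π ⟨n - 1, by omega⟩ ⊓ π j) = k - t := by
  obtain ⟨hinj, hdim, hint, -⟩ := hS
  obtain ⟨a, ha1, hak⟩ : ∃ a, 1 ≤ a ∧ k = t + a := ⟨k - t, by omega, by omega⟩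
  obtain ⟨s, hs1, hst⟩ : ∃ s, 1 ≤ s ∧ t = s + 1 := ⟨t - 1, by omega, by omega⟩
  have hkt : k - t = a := by omega
  have hts : t - 1 = s := by omega
  set W := π ⟨n - 1, by omega⟩ with hWdef
  -- the intersection dimensions
  have hint' : ∀ i j : Fin n, i ≠ j →
      finrank F ↥(π i ⊓ π j) = a ∨ finrank F ↥(π i ⊓ π j) = a + 1 := by
    intro i j hij
    have := hint i j hij
    simpa [hkt] using this
  -- V' is contained in the first m members
  have hV'le : ∀ i : Fin n, (i : ℕ) < m → V' ≤ π i := by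
    intro i hi
    by_cases h0 : (i : ℕ) = 0
    · have hne : i ≠ ⟨1, by omega⟩ := by
        intro h; rw [h] at h0; simp at h0
      rw [← hcenter i ⟨1, by omega⟩ hi (by simp; omega) hne]
      exact inf_le_left
    · have hne : i ≠ ⟨0, by omega⟩ := by
        intro h; rw [h] at h0; simp at h0
      rw [← hcenter i ⟨0, by omega⟩ hi (by simp; omega) hne]
      exact inf_le_left
  have hV'pspan : ∀ j : ℕ, 1 ≤ j → V' ≤ pspan π j := by
    intro j hj
    exact (hV'le ⟨0, by omega⟩ (by simp; omega)).trans (SPID.le_pspan π _ (by simp; omega))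
  -- the sunflower members intersect the preceding span exactly in V'
  have hsun : ∀ i : ℕ, 1 ≤ i → i < m → ∀ hi : i < n, π ⟨i, hi⟩ ⊓ pspan π i = V' := by
    intro i hi1 him hi
    have e := SPID.finrank_inf_pspan π hi
    rw [SPID.finrank_pspan_succ π i, hdt (i + 1) (by omega) (by omega), hdim] at e
    have hfr : finrank F ↥(π ⟨i, hi⟩ ⊓ pspan π i) = a := by omega
    have hle : V' ≤ π ⟨i, hi⟩ ⊓ pspan π i :=
      le_inf (hV'le _ him) (hV'pspan i hi1)
    exact (Submodule.eq_of_le_of_finrank_le hle (by rw [hfr, hV', hkt])).symm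
  -- members after the sunflower intersect the preceding span in dimension a+1
  have hq1 : ∀ q : ℕ, m ≤ q → q + 2 ≤ n → ∀ hq : q < n,
      finrank F ↥(π ⟨q, hq⟩ ⊓ pspan π q) = a + 1 := by
    intro q hq1 hq2 hq
    have e := SPID.finrank_inf_pspan π hq
    rw [SPID.finrank_pspan_succ π q, hdt1 (q + 1) (by omega) (by omega), hdim] at e
    omega
  -- dimension of the full span
  have Dn : finrank F ↥(pspan π n) = k + (n - 1) * s + 1 := by
    rw [SPID.pspan_top π, hspan, hts]
  -- closed form of the dimensions above m
  have Dmid : ∀ d : ℕ, m + d ≤ n - 1 →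
      finrank F ↥(pspan π (m + d)) = a + m * t + d * s := by
    intro d
    induction d with
    | zero => intro _; simpa [hkt] using hmax
    | succ d ih =>
      intro hd
      have h1 := ih (by omega)
      have h2 := SPID.finrank_pspan_succ π (m + d)
      rw [hdt1 (m + d + 1) (by omega) (by omega), hts] at h2
      rw [show m + (d + 1) = m + d + 1 from rfl, h2, h1]
      ring
  have Dn1 : finrank F ↥(pspan π (n - 1)) = a + m * t + (n - 1 - m) * s := by
    have := Dmid (n - 1 - m) (by omega)
    rwa [show m + (n - 1 - m) = n - 1 by omega] at this
  -- dimension of X = W ⊓ ⟨π_1, …, π_{n-1}⟩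
  have dX : finrank F ↥(W ⊓ pspan π (n - 1)) + 1 = a + m := by
    have hpn : pspan π (n - 1 + 1) = pspan π n := by rw [show n - 1 + 1 = n by omega]
    have e : finrank F ↥(W ⊓ pspan π (n - 1)) + finrank F ↥(pspan π n) =
        finrank F ↥W + finrank F ↥(pspan π (n - 1)) := by
      have e0 := SPID.finrank_inf_pspan π (show n - 1 < n by omega)
      rwa [hpn] at e0
    have eW : finrank F ↥W = k := hdim _
    obtain ⟨c, hc⟩ : ∃ c, n - 1 = m + c := ⟨n - 1 - m, by omega⟩
    have e3 : m * t = m * s + m := by rw [hst]; ring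
    have e5 : (n - 1) * s = m * s + c * s := by rw [hc]; ring
    have e6 : (n - 1 - m) * s = c * s := by rw [show n - 1 - m = c by omega]
    linarith [e, Dn, Dn1, e3, e5, e6, eW]
  -- Step 1: every member except possibly the last one contains V'
  have hstep1 : ∀ q : Fin n, (q : ℕ) < n - 1 → V' ≤ π q := by
    intro q hq
    by_cases hqm : (q : ℕ) < m
    · exact hV'le q hqm
    push_neg at hqm
    by_contra hnle
    have hq2 : (q : ℕ) + 2 ≤ n := by omega
    obtain ⟨C, hCval, hCbot⟩ : ∃ C : ℕ → Submodule F V,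
        (∀ i (h : i < m), C i = π q ⊓ π ⟨i, by omega⟩) ∧ (∀ i, m ≤ i → C i = ⊥) :=
      ⟨fun i => if h : i < m then π q ⊓ π ⟨i, by omega⟩ else ⊥,
        fun i h => dif_pos h, fun i h => dif_neg (by omega)⟩
    have hCsub : ∀ i, C i ⊓ (Finset.range i).sup C ≤ π q ⊓ V' := by
      intro i
      by_cases h : i < m
      · rcases Nat.eq_zero_or_pos i with rfl | hipos
        · simp
        · have hsup : (Finset.range i).sup C ≤ pspan π i := by
            refine Finset.sup_le fun b hb => ?_
            rw [Finset.mem_range] at hb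
            have hbm : b < m := by omega
            rw [hCval b hbm]
            exact inf_le_right.trans (SPID.le_pspan π _ (by simpa using hb))
          have h1 : C i ≤ π q ⊓ π ⟨i, by omega⟩ := le_of_eq (hCval i h)
          calc C i ⊓ (Finset.range i).sup C
              ≤ (π q ⊓ π ⟨i, by omega⟩) ⊓ pspan π i := inf_le_inf h1 hsup
            _ = π q ⊓ (π ⟨i, by omega⟩ ⊓ pspan π i) := inf_assoc _ _ _
            _ = π q ⊓ V' := by rw [hsun i hipos h (by omega)]
      · exact le_trans inf_le_left (by rw [hCbot i (by omega)]; exact bot_le)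
    have hbound := SPID.sum_bound C (π q ⊓ V') hCsub m
    have hterm : ∀ i ∈ Finset.range m, a ≤ finrank F ↥(C i) := by
      intro i hi
      rw [Finset.mem_range] at hi
      rw [hCval i hi]
      have hne : q ≠ (⟨i, by omega⟩ : Fin n) := by
        intro hqe
        have : (q : ℕ) = i := by rw [hqe]
        omega
      rcases hint' q _ hne with h | h <;> omega
    have hsum : m * a ≤ ∑ i ∈ Finset.range m, finrank F ↥(C i) := by
      calc m * a = ∑ _i ∈ Finset.range m, a := by
            rw [Finset.sum_const, Finset.card_range, smul_eq_mul]
        _ ≤ _ := Finset.sum_le_sum hterm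
    have hsupb : finrank F ↥((Finset.range m).sup C) ≤ a + 1 := by
      have hle : (Finset.range m).sup C ≤ π q ⊓ pspan π (q : ℕ) := by
        refine Finset.sup_le fun b hb => ?_
        rw [Finset.mem_range] at hb
        rw [hCval b hb]
        exact inf_le_inf_left _ (SPID.le_pspan π _ (by simp; omega))
      have hd := hq1 (q : ℕ) hqm (by omega) q.isLt
      rw [Fin.eta] at hd
      exact le_trans (Submodule.finrank_mono hle) hd.le
    have hzb : finrank F ↥(π q ⊓ V') + 1 ≤ a := by
      have h1 : finrank F ↥(π q ⊓ V') ≤ a := by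
        rw [← hkt, ← hV']
        exact Submodule.finrank_mono inf_le_right
      rcases Nat.lt_or_ge (finrank F ↥(π q ⊓ V')) a with h | h
      · omega
      · exfalso
        have heq : π q ⊓ V' = V' :=
          Submodule.eq_of_le_of_finrank_le inf_le_right (by rw [hV', hkt]; omega)
        exact hnle (by rw [← heq]; exact inf_le_left)
    have hm1 : 2 ≤ m - 1 := by omega
    have hma : m * a = (m - 1) * a + a := by
      have hmm : m - 1 + 1 = m := by omega
      conv_lhs => rw [← hmm]
      ring
    have hmz : (m - 1) * finrank F ↥(π q ⊓ V') + (m - 1) ≤ (m - 1) * a := by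
      calc (m - 1) * finrank F ↥(π q ⊓ V') + (m - 1)
          = (m - 1) * (finrank F ↥(π q ⊓ V') + 1) := by ring
        _ ≤ (m - 1) * a := Nat.mul_le_mul_left _ hzb
    clear hnle
    linarith [hbound, hsum, hsupb, hma, hmz, hm1]
  -- Step 2: V' is not contained in W (else we would have a junta)
  have hV'W : ¬ V' ≤ W := by
    intro hle
    refine hjunta ⟨V', by rw [hV'], ?_⟩
    intro i
    by_cases hi : (i : ℕ) < n - 1
    · exact hstep1 i hi
    · have hieq : i = ⟨n - 1, by omega⟩ := Fin.ext (by have := i.isLt; simp; omega)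
      rw [hieq]
      exact hle
  have hzW : finrank F ↥(W ⊓ V') + 1 ≤ a := by
    have h1 : finrank F ↥(W ⊓ V') ≤ a := by
      rw [← hkt, ← hV']
      exact Submodule.finrank_mono inf_le_right
    rcases Nat.lt_or_ge (finrank F ↥(W ⊓ V')) a with h | h
    · omega
    · exfalso
      have heq : W ⊓ V' = V' :=
        Submodule.eq_of_le_of_finrank_le inf_le_right (by rw [hV', hkt]; omega)
      exact hV'W (by rw [← heq]; exact inf_le_left)
  -- Step 3: the intersections of W with the sunflower members
  have hlastm : ∀ i : ℕ, ∀ h : i < m, (⟨n - 1, by omega⟩ : Fin n) ≠ ⟨i, by omega⟩ := by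
    intro i hi hne
    have : n - 1 = i := by simpa using congrArg Fin.val hne
    omega
  obtain ⟨B, hBval, hBbot⟩ : ∃ B : ℕ → Submodule F V,
      (∀ i (h : i < m), B i = W ⊓ π ⟨i, by omega⟩) ∧ (∀ i, m ≤ i → B i = ⊥) :=
    ⟨fun i => if h : i < m then W ⊓ π ⟨i, by omega⟩ else ⊥,
      fun i h => dif_pos h, fun i h => dif_neg (by omega)⟩
  have hBsub : ∀ i, B i ⊓ (Finset.range i).sup B ≤ W ⊓ V' := by
    intro i
    by_cases h : i < m
    · rcases Nat.eq_zero_or_pos i with rfl | hipos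
      · simp
      · have hsup : (Finset.range i).sup B ≤ pspan π i := by
          refine Finset.sup_le fun b hb => ?_
          rw [Finset.mem_range] at hb
          rw [hBval b (by omega)]
          exact inf_le_right.trans (SPID.le_pspan π _ (by simpa using hb))
        calc B i ⊓ (Finset.range i).sup B
            ≤ (W ⊓ π ⟨i, by omega⟩) ⊓ pspan π i := inf_le_inf (le_of_eq (hBval i h)) hsup
          _ = W ⊓ (π ⟨i, by omega⟩ ⊓ pspan π i) := inf_assoc _ _ _
          _ = W ⊓ V' := by rw [hsun i hipos h (by omega)]
    · exact le_trans inf_le_left (by rw [hBbot i (by omega)]; exact bot_le)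
  have hbound := SPID.sum_bound B (W ⊓ V') hBsub m
  have hterm : ∀ i ∈ Finset.range m, a ≤ finrank F ↥(B i) := by
    intro i hi
    rw [Finset.mem_range] at hi
    rw [hBval i hi]
    rcases hint' _ _ (hlastm i hi) with h | h
    · exact h.ge
    · exact le_trans (Nat.le_succ a) h.ge
  have hsum : m * a ≤ ∑ i ∈ Finset.range m, finrank F ↥(B i) := by
    calc m * a = ∑ _i ∈ Finset.range m, a := by
          rw [Finset.sum_const, Finset.card_range, smul_eq_mul]
      _ ≤ _ := Finset.sum_le_sum hterm
  have hsupX : (Finset.range m).sup B ≤ W ⊓ pspan π (n - 1) := by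
    refine Finset.sup_le fun b hb => ?_
    rw [Finset.mem_range] at hb
    rw [hBval b hb]
    exact inf_le_inf_left _ (SPID.le_pspan π _ (by simp; omega))
  have hm1 : 2 ≤ m - 1 := by omega
  have hm2 : m - 1 + 1 = m := by omega
  have hma : m * a = (m - 1) * a + a := by
    have hmm : m - 1 + 1 = m := by omega
    conv_lhs => rw [← hmm]
    ring
  have hmz : (m - 1) * finrank F ↥(W ⊓ V') + (m - 1) ≤ (m - 1) * a := by
    calc (m - 1) * finrank F ↥(W ⊓ V') + (m - 1)
        = (m - 1) * (finrank F ↥(W ⊓ V') + 1) := by ring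
      _ ≤ (m - 1) * a := Nat.mul_le_mul_left _ hzW
  have hfsupX : finrank F ↥((Finset.range m).sup B) ≤ finrank F ↥(W ⊓ pspan π (n - 1)) :=
    Submodule.finrank_mono hsupX
  have hXB : (Finset.range m).sup B = W ⊓ pspan π (n - 1) := by
    refine Submodule.eq_of_le_of_finrank_le hsupX ?_
    linarith only [hbound, hsum, hma, hmz, dX, hm2]
  have hBex : ∀ i : ℕ, ∀ h : i < m, finrank F ↥(B i) = a := by
    intro i0 hi0
    have hmem : finrank F ↥(B i0) = a ∨ finrank F ↥(B i0) = a + 1 := by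
      rw [hBval i0 hi0]
      exact hint' _ _ (hlastm i0 hi0)
    rcases hmem with h | h
    · exact h
    exfalso
    have hge : ∑ i ∈ Finset.range m, (a + if i = i0 then 1 else 0) ≤
        ∑ i ∈ Finset.range m, finrank F ↥(B i) := by
      refine Finset.sum_le_sum fun i hi => ?_
      by_cases hii : i = i0
      · subst hii; simp [h]
      · simpa [hii] using hterm i hi
    have hLHS : ∑ i ∈ Finset.range m, (a + if i = i0 then 1 else 0) = m * a + 1 := by
      rw [Finset.sum_add_distrib, Finset.sum_const, Finset.card_range, smul_eq_mul,
        Finset.sum_ite_eq' (Finset.range m) i0 (fun _ => 1)]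
      simp [Finset.mem_range.mpr hi0, mul_comm]
    linarith only [hbound, hfsupX, dX, hmz, hma, hge, hLHS, hm2]
  -- Step 4: conclusion
  intro j hj
  rw [hkt]
  by_cases hjm : (j : ℕ) < m
  · have hx := hBex (j : ℕ) hjm
    rw [hBval _ hjm] at hx
    rwa [Fin.eta] at hx
  · push_neg at hjm
    have hmemb : finrank F ↥(W ⊓ π j) = a ∨ finrank F ↥(W ⊓ π j) = a + 1 := by
      refine hint' _ _ ?_
      intro hne
      have : n - 1 = (j : ℕ) := by simpa using congrArg Fin.val hne
      omega
    rcases hmemb with h | h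
    · exact h
    exfalso
    have hsupm : (Finset.range m).sup B ≤ pspan π m := by
      refine Finset.sup_le fun b hb => ?_
      rw [Finset.mem_range] at hb
      rw [hBval b hb]
      exact inf_le_right.trans (SPID.le_pspan π _ (by simp; omega))
    have hWj : W ⊓ π j ≤ pspan π (j : ℕ) := by
      have h1 : W ⊓ π j ≤ W ⊓ pspan π (n - 1) :=
        inf_le_inf_left _ (SPID.le_pspan π _ hj)
      rw [← hXB] at h1
      exact h1.trans (hsupm.trans (SPID.pspan_mono π hjm))
    have hY : (W ⊓ π j) ⊔ V' ≤ π j ⊓ pspan π (j : ℕ) :=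
      sup_le (le_inf inf_le_right hWj) (le_inf (hstep1 j hj) (hV'pspan _ (by omega)))
    have hYr : finrank F ↥((W ⊓ π j) ⊔ V') ≤ a + 1 := by
      have hd := hq1 (j : ℕ) hjm (by omega) j.isLt
      rw [Fin.eta] at hd
      exact le_trans (Submodule.finrank_mono hY) hd.le
    have hform : finrank F ↥((W ⊓ π j) ⊔ V') + finrank F ↥((W ⊓ π j) ⊓ V') =
        finrank F ↥(W ⊓ π j) + finrank F ↥V' :=
      Submodule.finrank_sup_add_finrank_inf_eq _ _
    have hsmall : finrank F ↥((W ⊓ π j) ⊓ V') ≤ finrank F ↥(W ⊓ V') :=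
      Submodule.finrank_mono (inf_le_inf_right _ inf_le_left)
    rw [hV', hkt] at hform
    omega
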